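/- arXiv:0903.4394 — 2 statements merged into one kernel-verified Lean document; each statement's English description precedes it below -/
import Mathlib

section
/- Let T : [0,∞) → [0,∞) be a non-decreasing continuous function, let δ ∈ (0,1), and let s ∈ (0,∞). If T is of finite order, i.e. limsup_{r→∞} log T(r)/log r < ∞, then T(r+s) = T(r) + o(T(r)/r^δ) as r runs to infinity outside a set of finite logarithmic measure. -/
open Filter MeasureTheory Topology

noncomputable section

/-- The Nevanlinna proximity function `m(r, f)` of a function `f : ℂ → ℂ`. -/
def nevProx (f : ℂ → ℂ) (r : ℝ) : ℝ :=
  (2 * Real.pi)⁻¹ * ∫ θ in (0:ℝ)..(2 * Real.pi),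
      Real.log (max 1 (‖f ((r : ℂ) * Complex.exp ((θ : ℂ) * Complex.I))‖))

open Classical in
/-- The multiplicity of the pole of `f` at `z` (`0` if `f` does not have a pole there). -/
def poleOrder (f : ℂ → ℂ) (z : ℂ) : ℕ :=
  if h : MeromorphicAt f z then (-((meromorphicOrderAt f z).untopD 0)).toNat else 0

/-- The unintegrated counting function: the number of poles of `f` of modulus at most `t`,
counted with multiplicity. -/
def poleCount (f : ℂ → ℂ) (t : ℝ) : ℝ :=
  ∑' z : ℂ, if ‖z‖ ≤ t then (poleOrder f z : ℝ) else 0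

/-- The integrated Nevanlinna counting function `N(r, f)`. -/
def nevCount (f : ℂ → ℂ) (r : ℝ) : ℝ :=
  (∫ t in (0:ℝ)..r, (poleCount f t - poleCount f 0) / t) + poleCount f 0 * Real.log r

/-- The Nevanlinna characteristic function `T(r, f) = m(r, f) + N(r, f)`. -/
def nevChar (f : ℂ → ℂ) (r : ℝ) : ℝ := nevProx f r + nevCount f r

/-- The order of growth `ρ(f) = limsup_{r → ∞} log T(r, f) / log r` (as an extended real). -/
def growthOrder (f : ℂ → ℂ) : EReal :=
  Filter.limsup (fun r : ℝ => ((Real.log (nevChar f r) / Real.log r : ℝ) : EReal))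
    Filter.atTop

/-- `f` has finite order of growth. -/
def FiniteOrder (f : ℂ → ℂ) : Prop := growthOrder f < ⊤

/-- A set `E ⊆ ℝ` has finite logarithmic measure: `∫_{E ∩ [1, ∞)} dt/t < ∞`. -/
def FiniteLogMeasure (E : Set ℝ) : Prop :=
  ∫⁻ t in E ∩ Set.Ici 1, ENNReal.ofReal t⁻¹ < ⊤

/-- `u(r) = o(v(r))` as `r → ∞` outside a set of finite logarithmic measure. -/
def SmallOOut (u v : ℝ → ℝ) : Prop :=
  ∃ E : Set ℝ, FiniteLogMeasure E ∧
    ∀ ε : ℝ, 0 < ε → ∀ᶠ r in Filter.atTop, r ∉ E → |u r| ≤ ε * v r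

/-- `a` is a small function with respect to `w`: `T(r, a) = S(r, w)`. -/
def SmallFn (a w : ℂ → ℂ) : Prop := SmallOOut (nevChar a) (nevChar w)

/-- `f` is not identically zero as a meromorphic function (it is nonzero away from any
countable exceptional set). -/
def NotIdZero (f : ℂ → ℂ) : Prop := ¬ ({z : ℂ | f z ≠ 0}.Countable)

/-- `f` is not constant as a meromorphic function. -/
def NonConstant (f : ℂ → ℂ) : Prop := ¬ ∃ cst : ℂ, {z : ℂ | f z ≠ cst}.Countable

/-- `f` is a rational function: a quotient of two polynomials (up to junk values at the
finitely many poles). -/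
def IsRationalFn (f : ℂ → ℂ) : Prop :=
  ∃ p q : Polynomial ℂ, q ≠ 0 ∧ {z : ℂ | f z * q.eval z ≠ p.eval z}.Finite

/-- `f` coincides with a rational function as a meromorphic function (i.e. away from a
countable exceptional set). -/
def IsRationalMero (f : ℂ → ℂ) : Prop :=
  ∃ p q : Polynomial ℂ, q ≠ 0 ∧ {z : ℂ | f z * q.eval z ≠ p.eval z}.Countable

/-- `f` has a pole at `z₀`. -/
def IsPole (f : ℂ → ℂ) (z₀ : ℂ) : Prop :=
  Filter.Tendsto (fun z => ‖f z‖) (nhdsWithin z₀ {z₀}ᶜ) Filter.atTop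

/-- `f` has a pole of multiplicity `k` at `z₀`: its Laurent expansion at `z₀` begins at
order `-k`. -/
def PoleOfOrder (f : ℂ → ℂ) (k : ℕ) (z₀ : ℂ) : Prop :=
  ∃ g : ℂ → ℂ, AnalyticAt ℂ g z₀ ∧ g z₀ ≠ 0 ∧
    ∀ᶠ z in nhdsWithin z₀ {z₀}ᶜ, f z = g z / (z - z₀) ^ k

/-- `f` has a zero of multiplicity `k` at `z₀`: its Laurent expansion at `z₀` begins at
order `k`. -/
def ZeroOfOrder (f : ℂ → ℂ) (k : ℕ) (z₀ : ℂ) : Prop :=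
  ∃ g : ℂ → ℂ, AnalyticAt ℂ g z₀ ∧ g z₀ ≠ 0 ∧
    ∀ᶠ z in nhdsWithin z₀ {z₀}ᶜ, f z = (z - z₀) ^ k * g z

/-- `w` is a meromorphic function on `ℂ` whose representative `ℂ → ℂ` is honest: it is
analytic away from its poles (no junk values). -/
def NormalizedMero (w : ℂ → ℂ) : Prop :=
  MeromorphicOn w Set.univ ∧ ∀ z : ℂ, ¬ IsPole w z → AnalyticAt ℂ w z

/-- The data of a difference polynomial in `w(z), w(z + c 0), …, w(z + c (n-1))`:
the shifts `c`, a finite set `I` of multi-indexes, and the coefficient functions `a`. -/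
structure DiffPoly (n : ℕ) where
  c : Fin n → ℂ
  I : Finset (Fin (n + 1) → ℕ)
  a : (Fin (n + 1) → ℕ) → ℂ → ℂ

namespace DiffPoly

variable {n : ℕ}

/-- The shifts, including the trivial shift `0` as the `0`-th one. -/
def shift (P : DiffPoly n) : Fin (n + 1) → ℂ := Fin.cases 0 P.c

/-- The value `P(z, w) = ∑_{λ ∈ I} a_λ(z) w(z)^{λ 0} w(z + c 0)^{λ 1} ⋯ w(z + c (n-1))^{λ n}`. -/
def eval (P : DiffPoly n) (w : ℂ → ℂ) (z : ℂ) : ℂ :=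
  ∑ lam ∈ P.I, P.a lam z * ∏ j : Fin (n + 1), w (z + P.shift j) ^ lam j

/-- The total degree `deg_w(P) = max_{λ ∈ I} (λ_0 + ⋯ + λ_n)`. -/
def deg (P : DiffPoly n) : ℕ := P.I.sup fun lam => ∑ j, lam j

/-- `ord_0(P) = min_{λ ∈ I} λ_0`, the order of the zero of `P(z, x_0, …, x_n)` at `x_0 = 0`. -/
def ord0 (P : DiffPoly n) : ℕ := sInf {m : ℕ | ∃ lam ∈ P.I, lam 0 = m}

/-- The weight `κ(P) = max_{λ ∈ I} (λ_1 + ⋯ + λ_n)`. -/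
def weight (P : DiffPoly n) : ℕ := P.I.sup fun lam => ∑ j : Fin n, lam j.succ

/-- `P` is homogeneous: each term has the same nonzero total degree. -/
def Homogeneous (P : DiffPoly n) : Prop :=
  0 < P.deg ∧ ∀ lam ∈ P.I, (∑ j, lam j) = P.deg

end DiffPoly

/-- The value at `x` of the polynomial in one variable whose coefficients are the functions
`h 0, …, h d` evaluated at `z`. -/
def polyEval (h : ℕ → ℂ → ℂ) (d : ℕ) (z x : ℂ) : ℂ :=
  ∑ k ∈ Finset.range (d + 1), h k z * x ^ k

/-- `H` and `Q`, as polynomials in one variable over the field of meromorphic functions,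
have no common factors: away from a countable set of points `z` the complex polynomials
`H(z, ·)` and `Q(z, ·)` have no common root. -/
def NoCommonFactors (h : ℕ → ℂ → ℂ) (dH : ℕ) (q : ℕ → ℂ → ℂ) (dQ : ℕ) : Prop :=
  {z : ℂ | ∃ x : ℂ, polyEval h dH z x = 0 ∧ polyEval q dQ z x = 0}.Countable

end

/-! Put `U = log T`, which is non-decreasing and `O(log r)`, and fix `δ < β < 1`. Outside
`E = {r ≥ A | r ^ (-β) ≤ U (r + s) - U r}` we get `T (r + s) / T r - 1 ≤ 2 (U (r + s) - U r) <
2 r ^ (-β) = o(r ^ (-δ))`. On `E ∩ [R, 2R]` we have `1 / t ≤ R ^ (β - 1) (U (t + s) - U t)`, and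
`∫_R^{2R} (U (t + s) - U t) dt ≤ s (U (2R + s) - U R) = O(log R)`, because the shifted and the
unshifted integral differ only on two intervals of length `s`. So the logarithmic measure of `E`
in the dyadic block `[R, 2R]` is `O(R ^ (β - 1) log R)`, which is summable over `R = A 2 ^ k`. -/

open Real Set

theorem Monotone.integral_comp_add_sub_le {U : ℝ → ℝ} (hU : Monotone U) (a b : ℝ) {s : ℝ}
    (hs : 0 ≤ s) : ∫ t in a..b, (U (t + s) - U t) ≤ s * (U (b + s) - U a) := by
  have hint : ∀ c d : ℝ, IntervalIntegrable U volume c d := fun _ _ => hU.intervalIntegrable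
  have hshift : Monotone fun t => U (t + s) := fun x y hxy => hU (by linarith)
  -- after the shift, only the two end intervals of length `s` survive
  have hends : ∫ t in a..b, (U (t + s) - U t) =
      (∫ t in b..b + s, U t) - ∫ t in a..a + s, U t := by
    rw [intervalIntegral.integral_sub hshift.intervalIntegrable (hint _ _),
      intervalIntegral.integral_comp_add_right,
      intervalIntegral.integral_interval_sub_interval_comm' (hint _ _) (hint _ _) (hint _ _)]
  have hupper : ∫ t in b..b + s, U t ≤ s * U (b + s) := by
    simpa using intervalIntegral.integral_mono_on (by linarith : b ≤ b + s) (hint _ _)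
      intervalIntegrable_const fun t ht => hU ht.2
  have hlower : s * U a ≤ ∫ t in a..a + s, U t := by
    simpa using intervalIntegral.integral_mono_on (by linarith : a ≤ a + s)
      intervalIntegrable_const (hint _ _) fun t ht => hU ht.1
  rw [hends]
  linarith

theorem Monotone.setLIntegral_inv_inter_Icc_le {U : ℝ → ℝ} (hU : Monotone U) {β s R : ℝ}
    (hβ : β ≤ 1) (hs : 0 ≤ s) (hR : 0 < R) :
    ∫⁻ t in {r | r ^ (-β) ≤ U (r + s) - U r} ∩ Icc R (2 * R), ENNReal.ofReal t⁻¹ ≤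
      ENNReal.ofReal (R ^ (β - 1) * (s * (U (2 * R + s) - U R))) := by
  have hshift : Monotone fun t => U (t + s) := fun x y hxy => hU (by linarith)
  have hmeas : MeasurableSet {r : ℝ | r ^ (-β) ≤ U (r + s) - U r} :=
    measurableSet_le (by fun_prop) (hshift.measurable.sub hU.measurable)
  have hpt : ∀ t ∈ {r | r ^ (-β) ≤ U (r + s) - U r} ∩ Icc R (2 * R),
      t⁻¹ ≤ R ^ (β - 1) * (U (t + s) - U t) := by
    rintro t ⟨ht, hRt, -⟩
    have ht0 : 0 < t := hR.trans_le hRt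
    calc t⁻¹ = t ^ (β - 1) * t ^ (-β) := by rw [← rpow_add ht0, ← rpow_neg_one]; ring_nf
      _ ≤ R ^ (β - 1) * (U (t + s) - U t) :=
        mul_le_mul (rpow_le_rpow_of_nonpos hR hRt (by linarith)) ht (by positivity)
          (by positivity)
  have hint : IntegrableOn (fun t => R ^ (β - 1) * (U (t + s) - U t)) (Icc R (2 * R)) :=
    ((hshift.locallyIntegrable.integrableOn_isCompact isCompact_Icc).sub
      (hU.locallyIntegrable.integrableOn_isCompact isCompact_Icc)).const_mul _
  have hnonneg : ∀ t, 0 ≤ R ^ (β - 1) * (U (t + s) - U t) := fun t =>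
    mul_nonneg (by positivity) (sub_nonneg.2 (hU (by linarith)))
  calc ∫⁻ t in {r | r ^ (-β) ≤ U (r + s) - U r} ∩ Icc R (2 * R), ENNReal.ofReal t⁻¹
      ≤ ∫⁻ t in {r | r ^ (-β) ≤ U (r + s) - U r} ∩ Icc R (2 * R),
          ENNReal.ofReal (R ^ (β - 1) * (U (t + s) - U t)) :=
        setLIntegral_mono' (hmeas.inter measurableSet_Icc) fun t ht =>
          ENNReal.ofReal_le_ofReal (hpt t ht)
    _ ≤ ∫⁻ t in Icc R (2 * R), ENNReal.ofReal (R ^ (β - 1) * (U (t + s) - U t)) :=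
        lintegral_mono_set inter_subset_right
    _ = ENNReal.ofReal (R ^ (β - 1) * ∫ t in R..2 * R, (U (t + s) - U t)) := by
        rw [← ofReal_integral_eq_lintegral_ofReal hint (ae_of_all _ hnonneg),
          integral_Icc_eq_integral_Ioc, ← intervalIntegral.integral_of_le (by linarith),
          intervalIntegral.integral_const_mul]
    _ ≤ ENNReal.ofReal (R ^ (β - 1) * (s * (U (2 * R + s) - U R))) :=
        ENNReal.ofReal_le_ofReal
          (mul_le_mul_of_nonneg_left (hU.integral_comp_add_sub_le _ _ hs) (by positivity))

theorem summable_dyadic_rpow_mul_add_log {A γ : ℝ} (a b : ℝ) (hA : 0 < A) (hγ : γ < 0) :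
    Summable fun k : ℕ => (A * 2 ^ k) ^ γ * (a + b * log (A * 2 ^ k)) := by
  set q : ℝ := 2 ^ γ
  have hq0 : 0 ≤ q := by positivity
  have hq1 : q < 1 := rpow_lt_one_of_one_lt_of_neg one_lt_two hγ
  have hpow : ∀ k : ℕ, ((2 : ℝ) ^ k) ^ γ = q ^ k := fun k => by
    rw [← rpow_natCast, ← rpow_mul zero_le_two, mul_comm, rpow_mul zero_le_two, rpow_natCast]
  have hterm : ∀ k : ℕ, (A * 2 ^ k) ^ γ * (a + b * log (A * 2 ^ k)) =
      A ^ γ * (a + b * log A) * q ^ k + A ^ γ * b * log 2 * (k * q ^ k) := fun k => by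
    rw [mul_rpow hA.le (by positivity), log_mul hA.ne' (by positivity), log_pow, hpow]
    ring
  simp_rw [hterm]
  have hk : Summable fun k : ℕ => (k : ℝ) * q ^ k := by
    simpa using summable_pow_mul_geometric_of_norm_lt_one 1
      (by rwa [Real.norm_eq_abs, abs_of_nonneg hq0])
  exact ((summable_geometric_of_lt_one hq0 hq1).mul_left _).add (hk.mul_left _)

theorem finiteLogMeasure_inter_Ici_of_dyadic {E : Set ℝ} {A : ℝ} {c : ℕ → ℝ} (hA : 0 < A)
    (hc : Summable c)
    (hblock : ∀ k : ℕ, ∫⁻ t in E ∩ Icc (A * 2 ^ k) (A * 2 ^ (k + 1)), ENNReal.ofReal t⁻¹ ≤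
      ENNReal.ofReal (c k)) :
    FiniteLogMeasure (E ∩ Ici A) := by
  have hcover : E ∩ Ici A ∩ Ici 1 ⊆ ⋃ k : ℕ, E ∩ Icc (A * 2 ^ k) (A * 2 ^ (k + 1)) := by
    rintro r ⟨⟨hrE, hrA⟩, -⟩
    obtain ⟨k, hk, hk'⟩ := exists_nat_pow_near ((one_le_div hA).2 hrA) one_lt_two
    exact mem_iUnion.2 ⟨k, hrE, (le_div_iff₀' hA).1 hk, ((div_lt_iff₀' hA).1 hk').le⟩
  calc ∫⁻ t in E ∩ Ici A ∩ Ici 1, ENNReal.ofReal t⁻¹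
      ≤ ∫⁻ t in ⋃ k : ℕ, E ∩ Icc (A * 2 ^ k) (A * 2 ^ (k + 1)), ENNReal.ofReal t⁻¹ :=
        lintegral_mono_set hcover
    _ ≤ ∑' k : ℕ, ∫⁻ t in E ∩ Icc (A * 2 ^ k) (A * 2 ^ (k + 1)), ENNReal.ofReal t⁻¹ :=
        lintegral_iUnion_le _ _
    _ ≤ ∑' k : ℕ, ENNReal.ofReal (c k) := ENNReal.tsum_le_tsum hblock
    _ < ⊤ := hc.tsum_ofReal_lt_top

theorem Monotone.finiteLogMeasure_setOf_rpow_neg_le {U : ℝ → ℝ} (hU : Monotone U)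
    {A M β s : ℝ} (hA : 0 < A) (hs : 0 ≤ s) (hsA : s ≤ A) (hβ : β < 1)
    (hgrowth : ∀ x ≥ A, U x ≤ M * log x) :
    FiniteLogMeasure ({r | r ^ (-β) ≤ U (r + s) - U r} ∩ Ici A) := by
  refine finiteLogMeasure_inter_Ici_of_dyadic hA
    ((summable_dyadic_rpow_mul_add_log (M * log 3 - U A) M hA (sub_neg.2 hβ)).mul_left s)
    fun k => ?_
  set R := A * 2 ^ k
  have hAR : A ≤ R := le_mul_of_one_le_right hA.le (one_le_pow₀ one_le_two)
  have hR0 : 0 < R := hA.trans_le hAR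
  rw [show A * 2 ^ (k + 1) = 2 * R by ring]
  refine (hU.setLIntegral_inv_inter_Icc_le hβ.le hs hR0).trans (ENNReal.ofReal_le_ofReal ?_)
  have hinc : U (2 * R + s) - U R ≤ M * log 3 - U A + M * log R := by
    have h3R : U (2 * R + s) ≤ M * log (3 * R) :=
      (hU (by linarith)).trans (hgrowth _ (by linarith))
    rw [log_mul three_ne_zero hR0.ne'] at h3R
    linarith [hU hAR]
  calc R ^ (β - 1) * (s * (U (2 * R + s) - U R))
      ≤ R ^ (β - 1) * (s * (M * log 3 - U A + M * log R)) := by gcongr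
    _ = s * (R ^ (β - 1) * (M * log 3 - U A + M * log R)) := by ring

theorem MonotoneOn.finiteLogMeasure_setOf_rpow_neg_le {U : ℝ → ℝ} {A M β s : ℝ}
    (hU : MonotoneOn U (Ici A)) (hA : 0 < A) (hs : 0 ≤ s) (hsA : s ≤ A) (hβ : β < 1)
    (hgrowth : ∀ x ≥ A, U x ≤ M * log x) :
    FiniteLogMeasure ({r | r ^ (-β) ≤ U (r + s) - U r} ∩ Ici A) := by
  -- extended constantly to the left of `A`, `U` becomes monotone on `ℝ`, hence measurable
  have hV : Monotone fun r => U (max r A) := fun x y hxy =>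
    hU (le_max_right x A) (le_max_right y A) (max_le_max_right A hxy)
  convert hV.finiteLogMeasure_setOf_rpow_neg_le hA hs hsA hβ
    (fun x hx => by simpa only [max_eq_left hx] using hgrowth x hx) using 1
  ext r
  simp only [mem_inter_iff, mem_ofPred_eq, mem_Ici]
  refine and_congr_left fun hr => ?_
  rw [max_eq_left hr, max_eq_left (by linarith)]

theorem sub_one_le_two_mul_log {x : ℝ} (hx : 1 ≤ x) (hlog : log x ≤ 1) : x - 1 ≤ 2 * log x := by
  have h := abs_exp_sub_one_le (x := log x) (by rwa [abs_of_nonneg (log_nonneg hx)])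
  rwa [exp_log (by linarith), abs_of_nonneg (by linarith), abs_of_nonneg (log_nonneg hx)] at h

theorem tendsto_shift_quotient_of_log_increment_lt {T : ℝ → ℝ} {A β δ s : ℝ} (hA : 1 ≤ A)
    (hmono : MonotoneOn T (Ici A)) (hpos : ∀ r ≥ A, 0 < T r) (hs : 0 ≤ s) (hβ : 0 ≤ β)
    (hδβ : δ < β) :
    Tendsto (fun r => (T (r + s) - T r) * r ^ δ / T r)
      (atTop ⊓ 𝓟 ({r | r ^ (-β) ≤ log (T (r + s)) - log (T r)} ∩ Ici A)ᶜ) (𝓝 0) := by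
  have hbound : Tendsto (fun r : ℝ => 2 * r ^ (δ - β)) atTop (𝓝 0) := by
    simpa [neg_sub] using (tendsto_rpow_neg_atTop (sub_pos.2 hδβ)).const_mul 2
  refine squeeze_zero' ?_ ?_ (hbound.mono_left inf_le_left) <;>
    rw [eventually_inf_principal] <;>
    filter_upwards [eventually_ge_atTop A] with r hr hrE
  all_goals
    have hr0 : 0 < r := by linarith
    have hTr := hpos r hr
    have hle : T r ≤ T (r + s) := hmono hr (show A ≤ r + s by linarith) (by linarith)
  · exact div_nonneg (mul_nonneg (sub_nonneg.2 hle) (by positivity)) hTr.le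
  · have hlog : log (T (r + s) / T r) < r ^ (-β) := by
      rw [log_div (hpos _ (by linarith)).ne' hTr.ne']
      by_contra! h
      exact hrE ⟨h, hr⟩
    have hr1 : r ^ (-β) ≤ 1 := rpow_le_one_of_one_le_of_nonpos (by linarith) (by linarith)
    calc (T (r + s) - T r) * r ^ δ / T r = (T (r + s) / T r - 1) * r ^ δ := by
          field_simp
      _ ≤ 2 * log (T (r + s) / T r) * r ^ δ := by
          gcongr
          exact sub_one_le_two_mul_log ((one_le_div hTr).2 hle) (by linarith)
      _ ≤ 2 * r ^ (-β) * r ^ δ := by gcongr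
      _ = 2 * r ^ (δ - β) := by rw [mul_assoc, ← rpow_add hr0, neg_add_eq_sub]

theorem exists_eventually_log_le_mul_log {f : ℝ → ℝ}
    (h : limsup (fun r : ℝ => ((log (f r) / log r : ℝ) : EReal)) atTop < ⊤) :
    ∃ M : ℝ, ∀ᶠ r in atTop, log (f r) ≤ M * log r := by
  obtain ⟨M, hM, -⟩ := EReal.exists_between_coe_real h
  refine ⟨M, ?_⟩
  filter_upwards [eventually_lt_of_limsup_lt hM, eventually_gt_atTop 1] with r hr hr1
  exact ((div_lt_iff₀ (log_pos hr1)).1 (EReal.coe_lt_coe_iff.1 hr)).le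

theorem nondecreasing_finite_order_shift_general (T : ℝ → ℝ)
    (hmono : MonotoneOn T (Set.Ici 0))
    (hnonneg : ∀ r ∈ Set.Ici (0 : ℝ), 0 ≤ T r)
    (δ : ℝ) (hδ0 : 0 < δ) (hδ1 : δ < 1) (s : ℝ) (hs : 0 < s)
    (hord : Filter.limsup
      (fun r : ℝ => ((Real.log (T r) / Real.log r : ℝ) : EReal)) Filter.atTop < ⊤) :
    ∃ E : Set ℝ, FiniteLogMeasure E ∧
      Filter.Tendsto (fun r => (T (r + s) - T r) * r ^ δ / T r)
        (Filter.atTop ⊓ Filter.principal Eᶜ) (nhds 0) := by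
  by_cases hzero : ∀ r ≥ 0, T r = 0
  · refine ⟨∅, by simp [FiniteLogMeasure], tendsto_const_nhds.congr' ?_⟩
    filter_upwards [(eventually_ge_atTop 0).filter_mono inf_le_left] with r hr
    simp [hzero r hr, hzero (r + s) (by linarith)]
  push Not at hzero
  obtain ⟨r₀, hr₀, hTr₀⟩ := hzero
  obtain ⟨M, hM⟩ := exists_eventually_log_le_mul_log hord
  obtain ⟨A, hA⟩ := eventually_atTop.mp (hM.and (eventually_ge_atTop (max r₀ (max s 1))))
  obtain ⟨hr₀A, hsA, hA1⟩ : r₀ ≤ A ∧ s ≤ A ∧ 1 ≤ A := by simpa using (hA A le_rfl).2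
  have hTmono : MonotoneOn T (Ici A) := hmono.mono (Ici_subset_Ici.2 (by linarith))
  have hTpos : ∀ r ≥ A, 0 < T r := fun r hr =>
    ((hnonneg r₀ hr₀).lt_of_ne' hTr₀).trans_le
      (hmono hr₀ (show (0 : ℝ) ≤ r by linarith) (hr₀A.trans hr))
  have hlogmono : MonotoneOn (fun r => log (T r)) (Ici A) := fun x hx y hy hxy =>
    log_le_log (hTpos x hx) (hTmono hx hy hxy)
  refine ⟨{r | r ^ (-((1 + δ) / 2)) ≤ log (T (r + s)) - log (T r)} ∩ Ici A, ?_, ?_⟩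
  · exact hlogmono.finiteLogMeasure_setOf_rpow_neg_le (by linarith) hs.le hsA (by linarith)
      fun x hx => (hA x hx).1
  · exact tendsto_shift_quotient_of_log_increment_lt hA1 hTmono hTpos hs.le (by linarith)
      (by linarith)

/-- Lemma 3.2: if `T : [0,∞) → [0,∞)` is non-decreasing, continuous and
of finite order, then `T(r+s) = T(r) + o(T(r)/r^δ)` outside a set of finite logarithmic
measure. -/
theorem nondecreasing_finite_order_shift (T : ℝ → ℝ)
    (hmono : MonotoneOn T (Set.Ici 0)) (hcont : ContinuousOn T (Set.Ici 0))
    (hnonneg : ∀ r ∈ Set.Ici (0 : ℝ), 0 ≤ T r)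
    (δ : ℝ) (hδ0 : 0 < δ) (hδ1 : δ < 1) (s : ℝ) (hs : 0 < s)
    (hord : Filter.limsup
      (fun r : ℝ => ((Real.log (T r) / Real.log r : ℝ) : EReal)) Filter.atTop < ⊤) :
    ∃ E : Set ℝ, FiniteLogMeasure E ∧
      Filter.Tendsto (fun r => (T (r + s) - T r) * r ^ δ / T r)
        (Filter.atTop ⊓ Filter.principal Eᶜ) (nhds 0) :=
  nondecreasing_finite_order_shift_general T hmono hnonneg δ hδ0 hδ1 s hs hord
end

section
/- Let a_0 ≢ 0, a_1, a_2 be rational functions and let w be a meromorphic function on ℂ satisfying the difference equation w(z+1) + w(z−1) = (a_2(z)w(z)^2 + a_1(z)w(z) + a_0(z))/w(z)^2. If w has a zero of multiplicity k_0 ≥ 1 at a point z_0 at which a_0, a_1 and a_2 are analytic and a_0(z_0) ≠ 0, then w has a pole of multiplicity at least 2k_0 at z_0 + 1 or at z_0 − 1. -/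
open Filter MeasureTheory Topology

/-!
Near `z₀` write `w = (z - z₀)^k₀ g` with `g(z₀) ≠ 0`. The difference equation holds off a
countable set, hence (identity principle) in a punctured neighbourhood of `z₀`, and there
its right-hand side `(a₂w² + a₁w + a₀)/w²` has order exactly `-2k₀`: the numerator tends to
`a₀(z₀) ≠ 0` because `w → 0`. The order of `w(z + 1) + w(z - 1)` at `z₀` is at least the smaller
of the orders of the two translates, so one of them is `≤ -2k₀`, which is a pole of `w` of
multiplicity at least `2k₀` at `z₀ + 1` or `z₀ - 1`.
-/

open Filter Topology

theorem Set.Countable.frequently_notMem_nhdsNE {𝕜 : Type*} [NontriviallyNormedField 𝕜]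
    [CompleteSpace 𝕜] {s : Set 𝕜} (hs : s.Countable) (x : 𝕜) : ∃ᶠ z in 𝓝[≠] x, z ∉ s := by
  simp only [Filter.Frequently, not_not]
  intro h
  obtain ⟨U, hU, hxU, hUs⟩ := mem_nhdsWithin.1 h
  obtain ⟨z, hz, hzU⟩ := ((hs.insert x).dense_compl 𝕜).exists_mem_open hU ⟨x, hxU⟩
  rw [Set.mem_compl_iff, Set.mem_insert_iff, not_or] at hz
  exact hz.2 (hUs ⟨hzU, hz.1⟩)

section

variable {𝕜 : Type*} [NontriviallyNormedField 𝕜] {x : 𝕜}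

theorem MeromorphicAt.eventuallyEq_nhdsNE_of_countable_ne [CompleteSpace 𝕜] {E : Type*}
    [NormedAddCommGroup E] [NormedSpace 𝕜 E] {f g : 𝕜 → E}
    (hf : MeromorphicAt f x) (hg : MeromorphicAt g x) (h : {z | f z ≠ g z}.Countable) :
    f =ᶠ[𝓝[≠] x] g := by
  have hfg := (hf.sub hg).frequently_zero_iff_eventuallyEq_zero.1
    ((h.frequently_notMem_nhdsNE x).mono fun z hz => by simpa [sub_eq_zero] using hz)
  filter_upwards [hfg] with z hz using sub_eq_zero.1 hz

theorem meromorphicOrderAt_quadratic_eq_zero {a₀ a₁ a₂ w : 𝕜 → 𝕜}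
    (h₀ : AnalyticAt 𝕜 a₀ x) (h₁ : AnalyticAt 𝕜 a₁ x) (h₂ : AnalyticAt 𝕜 a₂ x) (hx : a₀ x ≠ 0)
    (hw : MeromorphicAt w x) (hpos : 0 < meromorphicOrderAt w x) :
    meromorphicOrderAt (fun z => a₂ z * w z ^ 2 + a₁ z * w z + a₀ z) x = 0 := by
  have hw0 : Tendsto w (𝓝[≠] x) (𝓝 0) := (tendsto_zero_iff_meromorphicOrderAt_pos hw).2 hpos
  have hlim : Tendsto (fun z => a₂ z * w z ^ 2 + a₁ z * w z + a₀ z) (𝓝[≠] x) (𝓝 (a₀ x)) := by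
    have lim (a : 𝕜 → 𝕜) (ha : AnalyticAt 𝕜 a x) : Tendsto a (𝓝[≠] x) (𝓝 (a x)) :=
      ha.continuousAt.tendsto.mono_left nhdsWithin_le_nhds
    simpa using (((lim a₂ h₂).mul (hw0.pow 2)).add ((lim a₁ h₁).mul hw0)).add (lim a₀ h₀)
  exact (tendsto_ne_zero_iff_meromorphicOrderAt_eq_zero (by fun_prop)).1 ⟨_, hx, hlim⟩

theorem meromorphicOrderAt_eq_neg_of_mul_pow_eventuallyEq {f w g : 𝕜 → 𝕜} {k n : ℕ}
    (hf : MeromorphicAt f x) (hw : MeromorphicAt w x) (hwk : meromorphicOrderAt w x = k)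
    (hg : meromorphicOrderAt g x = 0) (h : f * w ^ n =ᶠ[𝓝[≠] x] g) :
    meromorphicOrderAt f x = ((-(n * k : ℤ) : ℤ) : WithTop ℤ) := by
  have hfwg := meromorphicOrderAt_congr h
  rw [meromorphicOrderAt_mul hf (hw.pow n), meromorphicOrderAt_pow hw, hwk, hg] at hfwg
  cases hfx : meromorphicOrderAt f x with
  | top => simp [hfx] at hfwg
  | coe m =>
    rw [hfx] at hfwg
    have hm : ((m + n * k : ℤ) : WithTop ℤ) = 0 := by push_cast; exact hfwg
    rw [WithTop.coe_eq_coe, eq_neg_iff_add_eq_zero]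
    exact_mod_cast hm

end

theorem ZeroOfOrder.meromorphicOrderAt_eq {f : ℂ → ℂ} {k : ℕ} {x : ℂ} (h : ZeroOfOrder f k x) :
    meromorphicOrderAt f x = k := by
  obtain ⟨g, hg, hgx, hfg⟩ := h
  have hf : MeromorphicAt f x :=
    (((analyticAt_id.sub analyticAt_const).pow k).mul hg).meromorphicAt.congr
      (hfg.mono fun _ hz => hz.symm)
  exact (meromorphicOrderAt_eq_int_iff hf).2 ⟨g, hg, hgx, by simpa using hfg⟩

theorem exists_poleOfOrder_of_meromorphicOrderAt_le {f : ℂ → ℂ} {x : ℂ} {k : ℕ}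
    (hf : MeromorphicAt f x) (h : meromorphicOrderAt f x ≤ ((-k : ℤ) : WithTop ℤ)) :
    ∃ m : ℕ, k ≤ m ∧ PoleOfOrder f m x := by
  obtain ⟨n, hn⟩ := WithTop.ne_top_iff_exists.1 (ne_top_of_le_ne_top (by simp) h)
  have hnk : n ≤ -k := by rw [← hn] at h; exact_mod_cast h
  obtain ⟨g, hg, hgx, hfg⟩ := (meromorphicOrderAt_eq_int_iff hf).1 hn.symm
  refine ⟨(-n).toNat, by omega, g, hg, hgx, ?_⟩
  filter_upwards [hfg] with z hz
  rw [hz, smul_eq_mul, ← zpow_natCast, Int.toNat_of_nonneg (by omega), zpow_neg,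
    div_eq_inv_mul, inv_inv]

theorem dP1_zero_forces_pole_general (a0 a1 a2 : ℂ → ℂ)
    (w : ℂ → ℂ) (hw : NormalizedMero w)
    (heq : {z : ℂ | (w (z + 1) + w (z - 1)) * w z ^ 2 ≠
      a2 z * w z ^ 2 + a1 z * w z + a0 z}.Countable)
    (z₀ : ℂ) (k₀ : ℕ) (hk₀ : 1 ≤ k₀) (hzero : ZeroOfOrder w k₀ z₀)
    (ha0an : AnalyticAt ℂ a0 z₀) (ha1an : AnalyticAt ℂ a1 z₀) (ha2an : AnalyticAt ℂ a2 z₀)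
    (ha0z₀ : a0 z₀ ≠ 0) :
    (∃ m : ℕ, 2 * k₀ ≤ m ∧ PoleOfOrder w m (z₀ + 1)) ∨
      (∃ m : ℕ, 2 * k₀ ≤ m ∧ PoleOfOrder w m (z₀ - 1)) := by
  have hmero (c : ℂ) : MeromorphicAt w c := hw.1 c (Set.mem_univ c)
  have hwp : MeromorphicAt (fun z => w (z + 1)) z₀ :=
    meromorphicAt_fun_comp_add_const_iff_meromorphicAt.2 (hmero _)
  have hwm : MeromorphicAt (fun z => w (z - 1)) z₀ :=
    meromorphicAt_fun_comp_sub_const_iff_meromorphicAt.2 (hmero _)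
  have hwk := hzero.meromorphicOrderAt_eq
  have hN := meromorphicOrderAt_quadratic_eq_zero ha0an ha1an ha2an ha0z₀ (hmero z₀)
    (by rw [hwk]; exact_mod_cast hk₀)
  have hS : meromorphicOrderAt (fun z => w (z + 1) + w (z - 1)) z₀ =
      ((-(2 * k₀) : ℤ) : WithTop ℤ) :=
    meromorphicOrderAt_eq_neg_of_mul_pow_eventuallyEq (hwp.add hwm) (hmero z₀) hwk hN
      (MeromorphicAt.eventuallyEq_nhdsNE_of_countable_ne (by fun_prop) (by fun_prop) heq)
  have hmin := (meromorphicOrderAt_add hwp hwm).trans_eq hS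
  rw [min_le_iff, meromorphicOrderAt_fun_comp_add_const_eq_meromorphicOrderAt,
    meromorphicOrderAt_fun_comp_sub_const_eq_meromorphicOrderAt] at hmin
  rcases hmin with h | h
  · exact Or.inl (exists_poleOfOrder_of_meromorphicOrderAt_le (hmero _) (by exact_mod_cast h))
  · exact Or.inr (exists_poleOfOrder_of_meromorphicOrderAt_le (hmero _) (by exact_mod_cast h))

/-- if a meromorphic solution of
`w(z+1) + w(z-1) = (a₂w² + a₁w + a₀)/w²` has a zero of multiplicity `k₀` at `z₀`, where the
coefficients are analytic and `a₀(z₀) ≠ 0`, then `w` has a pole of multiplicity at least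
`2k₀` at `z₀ + 1` or at `z₀ - 1`. -/
theorem dP1_zero_forces_pole (a0 a1 a2 : ℂ → ℂ)
    (ha0 : IsRationalFn a0) (ha1 : IsRationalFn a1) (ha2 : IsRationalFn a2)
    (ha0nz : NotIdZero a0)
    (w : ℂ → ℂ) (hw : NormalizedMero w)
    (heq : {z : ℂ | (w (z + 1) + w (z - 1)) * w z ^ 2 ≠
      a2 z * w z ^ 2 + a1 z * w z + a0 z}.Countable)
    (z₀ : ℂ) (k₀ : ℕ) (hk₀ : 1 ≤ k₀) (hzero : ZeroOfOrder w k₀ z₀)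
    (ha0an : AnalyticAt ℂ a0 z₀) (ha1an : AnalyticAt ℂ a1 z₀) (ha2an : AnalyticAt ℂ a2 z₀)
    (ha0z₀ : a0 z₀ ≠ 0) :
    (∃ m : ℕ, 2 * k₀ ≤ m ∧ PoleOfOrder w m (z₀ + 1)) ∨
      (∃ m : ℕ, 2 * k₀ ≤ m ∧ PoleOfOrder w m (z₀ - 1)) :=
  dP1_zero_forces_pole_general a0 a1 a2 w hw heq z₀ k₀ hk₀ hzero ha0an ha1an ha2an ha0z₀
end
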